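/- The quadratic form of the Nakayama matrix A^(n) satisfies q(x) = Σ_{i=1}^{n} x_i² + Σ_{i<j} (−1)^{j−i} x_i x_j, and for all x ∈ ℝⁿ, 2·q(x) = (Σ_{i=1}^{n} (−1)^i x_i)² + Σ_{i=1}^{n} x_i², hence q(x) > 0 for every nonzero x. -/

import Mathlib

/-!
Writing `s = ((-1)^i)_i`, the symmetrization of the Nakayama matrix is `A + Aᵀ = s sᵀ + I`:
off the diagonal exactly one of `a_{ij}, a_{ji}` survives and equals `(-1)^(i+j) = s_i s_j`.
Hence `2 q(x) = xᵀ(A + Aᵀ)x = (s ⬝ x)² + ‖x‖²`, which is positive for `x ≠ 0`.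
-/

open Matrix BigOperators Finset

/-- The Nakayama matrix `A^(n)`: upper triangular with `a_{ij} = (-1)^(j-i)` for
`i ≤ j` and `0` below the diagonal. -/
def nakayama (n : ℕ) : Matrix (Fin n) (Fin n) ℝ :=
  Matrix.of fun i j =>
    if (i : ℕ) ≤ (j : ℕ) then (-1 : ℝ) ^ ((j : ℕ) - (i : ℕ)) else 0

section QuadraticForm

variable {ι R : Type*} [Fintype ι] [CommRing R]

theorem dotProduct_mulVec_eq_sum_sum (M : Matrix ι ι R) (x : ι → R) :
    x ⬝ᵥ M *ᵥ x = ∑ i, ∑ j, x i * M i j * x j := by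
  simp only [dotProduct, mulVec, Finset.mul_sum, mul_assoc]

theorem two_mul_dotProduct_mulVec_self (M : Matrix ι ι R) (x : ι → R) :
    2 * (x ⬝ᵥ M *ᵥ x) = x ⬝ᵥ (M + Mᵀ) *ᵥ x := by
  rw [add_mulVec, dotProduct_add, dotProduct_transpose_mulVec, two_mul]

theorem dotProduct_vecMulVec_mulVec_self (s x : ι → R) :
    x ⬝ᵥ vecMulVec s s *ᵥ x = (s ⬝ᵥ x) ^ 2 := by
  rw [vecMulVec_mulVec, op_smul_eq_smul, dotProduct_smul, dotProduct_comm x s, smul_eq_mul, sq]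

end QuadraticForm

theorem neg_one_pow_sub_eq_pow_mul_pow {M : Type*} [Monoid M] [HasDistribNeg M] {i j : ℕ}
    (h : i ≤ j) : (-1 : M) ^ (j - i) = (-1) ^ i * (-1) ^ j := by
  rw [← pow_add, show i + j = (j - i) + 2 * i by omega, pow_add, pow_mul]
  simp

section Entries

variable {n : ℕ} {i j : Fin n}

theorem nakayama_apply_of_lt (h : i < j) : nakayama n i j = (-1) ^ ((j : ℕ) - i) := by
  simp [nakayama, h.le]

@[simp]
theorem nakayama_apply_self (i : Fin n) : nakayama n i i = 1 := by
  simp [nakayama]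

theorem nakayama_apply_eq_zero_of_lt (h : j < i) : nakayama n i j = 0 := by
  simp [nakayama, not_le.2 h]

end Entries

theorem nakayama_eq_one_add (n : ℕ) :
    nakayama n = 1 + Matrix.of fun i j : Fin n =>
      if (i : ℕ) < (j : ℕ) then (-1 : ℝ) ^ ((j : ℕ) - (i : ℕ)) else 0 := by
  ext i j
  rcases lt_trichotomy i j with h | rfl | h
  · simp [nakayama_apply_of_lt h, one_apply, h.ne, h]
  · simp
  · simp [nakayama_apply_eq_zero_of_lt h, one_apply, h.ne', not_lt.2 h.le]

def altSign (n : ℕ) : Fin n → ℝ := fun i => (-1) ^ (i : ℕ)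

theorem nakayama_add_transpose (n : ℕ) :
    nakayama n + (nakayama n)ᵀ = vecMulVec (altSign n) (altSign n) + 1 := by
  ext i j
  rcases lt_trichotomy i j with h | rfl | h
  · simp [nakayama_apply_of_lt h, nakayama_apply_eq_zero_of_lt h, vecMulVec_apply, altSign,
      one_apply, h.ne, neg_one_pow_sub_eq_pow_mul_pow (Fin.le_def.1 h.le)]
  · simp [vecMulVec_apply, altSign, ← pow_add, ← two_mul, pow_mul]
  · simp [nakayama_apply_of_lt h, nakayama_apply_eq_zero_of_lt h, vecMulVec_apply, altSign,
      one_apply, h.ne', neg_one_pow_sub_eq_pow_mul_pow (Fin.le_def.1 h.le), mul_comm]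

theorem dotProduct_nakayama_mulVec_self (n : ℕ) (x : Fin n → ℝ) :
    x ⬝ᵥ nakayama n *ᵥ x =
      (∑ i, x i ^ 2) + ∑ i : Fin n, ∑ j : Fin n,
        if (i : ℕ) < (j : ℕ) then (-1 : ℝ) ^ ((j : ℕ) - (i : ℕ)) * x i * x j else 0 := by
  rw [nakayama_eq_one_add, add_mulVec, one_mulVec, dotProduct_add, dotProduct_mulVec_eq_sum_sum]
  simp only [dotProduct, of_apply, sq, ite_mul, zero_mul, mul_comm (x _)]

theorem two_mul_dotProduct_nakayama_mulVec_self (n : ℕ) (x : Fin n → ℝ) :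
    2 * (x ⬝ᵥ nakayama n *ᵥ x) = (altSign n ⬝ᵥ x) ^ 2 + x ⬝ᵥ x := by
  rw [two_mul_dotProduct_mulVec_self, nakayama_add_transpose, add_mulVec, dotProduct_add,
    dotProduct_vecMulVec_mulVec_self, one_mulVec]

theorem dotProduct_nakayama_mulVec_self_pos {n : ℕ} {x : Fin n → ℝ} (hx : x ≠ 0) :
    0 < x ⬝ᵥ nakayama n *ᵥ x := by
  have hnorm : 0 < x ⬝ᵥ x := by simpa using dotProduct_self_star_pos_iff.2 hx
  linarith [two_mul_dotProduct_nakayama_mulVec_self n x, sq_nonneg (altSign n ⬝ᵥ x)]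

/-- The quadratic form `q` of the Nakayama matrix satisfies
`q(x) = ∑ x_i² + ∑_{i<j} (-1)^(j-i) x_i x_j`, and
`2 q(x) = (∑ (-1)^i x_i)² + ∑ x_i²`, hence `q(x) > 0` for every nonzero `x`. -/
theorem nakayama_quadForm (n : ℕ) :
    (∀ x : Fin n → ℝ,
      x ⬝ᵥ (nakayama n).mulVec x =
        (∑ i, x i ^ 2) +
          ∑ i : Fin n, ∑ j : Fin n, if (i : ℕ) < (j : ℕ) then
            (-1 : ℝ) ^ ((j : ℕ) - (i : ℕ)) * x i * x j else 0) ∧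
    (∀ x : Fin n → ℝ,
      2 * (x ⬝ᵥ (nakayama n).mulVec x) =
        (∑ i : Fin n, (-1 : ℝ) ^ (i : ℕ) * x i) ^ 2 + ∑ i, x i ^ 2) ∧
    (∀ x : Fin n → ℝ, x ≠ 0 → 0 < x ⬝ᵥ (nakayama n).mulVec x) := by
  refine ⟨dotProduct_nakayama_mulVec_self n, fun x => ?_,
    fun x => dotProduct_nakayama_mulVec_self_pos⟩
  simpa only [dotProduct, altSign, sq] using two_mul_dotProduct_nakayama_mulVec_self n x
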